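/- arXiv:1409.5275 — 2 statements merged into one kernel-verified Lean document; each statement's English description precedes it below -/
import Mathlib

section
/- For the mixed polynomial f(z₁, z₂) = z₁|z₂|² on ℂ², at any point with z₁ ≠ 0 and z₂ ≠ 0 one has f(z₁,z₂)/|f(z₁,z₂)| = z₁/|z₁|. Consequently, for a = ρe^{iθ} with ρ > 0 and any 0 < ε < ρ, the image under f of the set U = {(z₁,z₂) : |z₁ − a| ≤ ε, |z₂| ≤ ε} is contained in {0} ∪ {η ∈ ℂ \ {0} : |Re(e^{−iθ} η/|η|) | ≥ cos α} where α = arcsin(ε/ρ); in particular f(U) is not a neighborhood of 0 in ℂ, so f is not an open mapping along the axis {z₂ = 0}. -/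
/-! Since `z₂ z̄₂ = |z₂|²` is a positive real, `f(z₁, z₂)` points in the direction of `z₁`.
After rotating by `e^{-iθ}`, the first coordinates of `U` fill the disc of radius `ε` about `ρ`,
which is seen from `0` under the half-angle `arcsin (ε / ρ)`. Hence every nonzero value of `f` on
`U` lies in a double cone around the line `ℝ e^{iθ}`, and this cone misses the ray
`ℝ_{>0} i e^{iθ}`, which accumulates at `0`. -/

open Complex ComplexConjugate Filter Topology

lemma mul_mul_conj_div_norm (z₁ : ℂ) {z₂ : ℂ} (h : z₂ ≠ 0) :
    z₁ * (z₂ * conj z₂) / ((‖z₁ * (z₂ * conj z₂)‖ : ℝ) : ℂ) = z₁ / ((‖z₁‖ : ℝ) : ℂ) := by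
  have hpos : ((normSq z₂ : ℝ) : ℂ) ≠ 0 := ofReal_ne_zero.mpr (normSq_pos.mpr h).ne'
  rw [mul_conj, norm_mul, norm_real, Real.norm_of_nonneg (normSq_nonneg z₂), ofReal_mul]
  exact mul_div_mul_right z₁ _ hpos

lemma cos_arcsin_le_re_div_norm {ρ ε : ℝ} {w : ℂ} (hερ : ε < ρ) (hw : ‖w - ρ‖ ≤ ε) :
    Real.cos (Real.arcsin (ε / ρ)) ≤ w.re / ‖w‖ := by
  have hdisc : (w.re - ρ) ^ 2 + w.im ^ 2 ≤ ε ^ 2 := by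
    have := pow_le_pow_left₀ (norm_nonneg _) hw 2
    simpa [Complex.sq_norm, normSq_apply, ← sq] using this
  have hε : 0 ≤ ε := (norm_nonneg _).trans hw
  have hρ : 0 < ρ := hε.trans_lt hερ
  have hre : 0 < w.re := by nlinarith [sq_nonneg w.im]
  have hnorm : ‖w‖ ^ 2 = w.re ^ 2 + w.im ^ 2 := by rw [Complex.sq_norm, normSq_apply]; ring
  have hw0 : 0 < ‖w‖ := norm_pos_iff.mpr fun h => by simp [h] at hre
  have hcos : 1 - (ε / ρ) ^ 2 = (ρ ^ 2 - ε ^ 2) / ρ ^ 2 := by field_simp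
  rw [Real.cos_arcsin, Real.sqrt_le_left (div_nonneg hre.le hw0.le), hcos, div_pow,
    div_le_div_iff₀ (by positivity) (by positivity), hnorm]
  have hρε : 0 ≤ ρ ^ 2 - ε ^ 2 := sub_nonneg.mpr (pow_le_pow_left₀ hε hερ.le 2)
  nlinarith [sq_nonneg (ρ * w.re - ρ ^ 2 + ε ^ 2), mul_nonneg hρε (sub_nonneg.mpr hdisc)]

lemma cos_arcsin_pos {x : ℝ} (h₁ : -1 < x) (h₂ : x < 1) : 0 < Real.cos (Real.arcsin x) := by
  rw [Real.cos_arcsin, Real.sqrt_pos]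
  nlinarith

lemma exp_neg_mul_I_mul_exp_mul_I (θ : ℝ) : exp (-(θ : ℂ) * I) * exp (θ * I) = 1 := by
  rw [← exp_add, neg_mul, neg_add_cancel, exp_zero]

lemma norm_exp_neg_mul_I_mul_sub (θ ρ : ℝ) (z : ℂ) :
    ‖exp (-(θ : ℂ) * I) * z - ρ‖ = ‖z - ρ * exp (θ * I)‖ := by
  have hrot : exp (-(θ : ℂ) * I) * z - ρ = exp (-(θ : ℂ) * I) * (z - ρ * exp (θ * I)) := by
    linear_combination ρ * exp_neg_mul_I_mul_exp_mul_I θ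
  rw [hrot, norm_mul, ← ofReal_neg, norm_exp_ofReal_mul_I, one_mul]

lemma norm_exp_neg_mul_I_mul (θ : ℝ) (z : ℂ) : ‖exp (-(θ : ℂ) * I) * z‖ = ‖z‖ := by
  rw [norm_mul, ← ofReal_neg, norm_exp_ofReal_mul_I, one_mul]

lemma image_subset_sector {ρ ε : ℝ} (θ : ℝ) (hερ : ε < ρ) :
    (fun p : ℂ × ℂ => p.1 * (p.2 * conj p.2)) ''
        {p : ℂ × ℂ | ‖p.1 - ρ * exp (θ * I)‖ ≤ ε ∧ ‖p.2‖ ≤ ε} ⊆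
      {0} ∪ {η : ℂ | η ≠ 0 ∧
        Real.cos (Real.arcsin (ε / ρ)) ≤ |(exp (-(θ : ℂ) * I) * η / ((‖η‖ : ℝ) : ℂ)).re|} := by
  rintro _ ⟨⟨z₁, z₂⟩, ⟨hz₁, -⟩, rfl⟩
  by_cases h : z₁ = 0 ∨ z₂ = 0
  · left
    rcases h with h | h <;> simp [h]
  right
  rw [not_or] at h
  refine ⟨by simp [h.1, h.2], ?_⟩
  rw [mul_div_assoc, mul_mul_conj_div_norm z₁ h.2, ← mul_div_assoc,
    ← norm_exp_neg_mul_I_mul θ z₁, div_ofReal_re]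
  refine (cos_arcsin_le_re_div_norm hερ ?_).trans (le_abs_self _)
  rwa [norm_exp_neg_mul_I_mul_sub]

lemma sector_not_mem_nhds_zero (θ : ℝ) {c : ℝ} (hc : 0 < c) :
    {0} ∪ {η : ℂ | η ≠ 0 ∧ c ≤ |(exp (-(θ : ℂ) * I) * η / ((‖η‖ : ℝ) : ℂ)).re|} ∉ 𝓝 0 := by
  intro hS
  let ray : ℝ → ℂ := fun t => t * (exp (θ * I) * I)
  have hray : Tendsto ray (𝓝[>] 0) (𝓝 0) := by
    have : Continuous ray := by fun_prop
    simpa [ray] using this.continuousWithinAt.tendsto (x := 0) (s := Set.Ioi 0)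
  obtain ⟨t, ht, ht0⟩ := ((hray.eventually hS).and self_mem_nhdsWithin).exists
  have hnorm : ‖ray t‖ = t := by
    simp [ray, norm_exp_ofReal_mul_I, abs_of_pos ht0]
  have hdir : exp (-(θ : ℂ) * I) * ray t / ((‖ray t‖ : ℝ) : ℂ) = I := by
    have ht' : (t : ℂ) ≠ 0 := ofReal_ne_zero.mpr ht0.ne'
    rw [hnorm, div_eq_iff ht']
    linear_combination t * I * exp_neg_mul_I_mul_exp_mul_I θ
  rcases ht with h0 | ⟨-, hle⟩
  · have := congrArg norm h0
    rw [hnorm, norm_zero] at this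
    exact ht0.ne' this
  · rw [hdir, I_re, abs_zero] at hle
    exact hc.not_ge hle

/-- Tibar's example `f(z₁,z₂) = z₁|z₂|²`: on the torus the argument of `f` equals the argument
of `z₁`; consequently the image of the polydisc neighborhood `U` of a point `(a,0)`, `a ≠ 0`,
is contained in an angular region, hence is not a neighborhood of `0`: `f` is not an open
mapping along `{z₂ = 0}`. -/
theorem tibar_not_open_along_axis :
    (∀ z₁ z₂ : ℂ, z₁ ≠ 0 → z₂ ≠ 0 →
      (z₁ * (z₂ * (starRingEnd ℂ) z₂)) /
          ((‖z₁ * (z₂ * (starRingEnd ℂ) z₂)‖ : ℝ) : ℂ) =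
        z₁ / ((‖z₁‖ : ℝ) : ℂ)) ∧
    ∀ ρ θ ε : ℝ, 0 < ρ → 0 < ε → ε < ρ →
      ((fun p : ℂ × ℂ => p.1 * (p.2 * (starRingEnd ℂ) p.2)) ''
          {p : ℂ × ℂ | ‖p.1 - (ρ : ℂ) * Complex.exp (θ * Complex.I)‖ ≤ ε ∧
            ‖p.2‖ ≤ ε} ⊆
        {0} ∪ {η : ℂ | η ≠ 0 ∧
          Real.cos (Real.arcsin (ε / ρ)) ≤
            |(Complex.exp (-(θ : ℂ) * Complex.I) * η / ((‖η‖ : ℝ) : ℂ)).re|}) ∧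
      ¬ ((fun p : ℂ × ℂ => p.1 * (p.2 * (starRingEnd ℂ) p.2)) ''
          {p : ℂ × ℂ | ‖p.1 - (ρ : ℂ) * Complex.exp (θ * Complex.I)‖ ≤ ε ∧
            ‖p.2‖ ≤ ε} ∈ nhds (0 : ℂ)) := by
  refine ⟨fun z₁ z₂ _ h₂ => mul_mul_conj_div_norm z₁ h₂, fun ρ θ ε hρ hε hερ => ?_⟩
  have himage := image_subset_sector θ hερ
  have hcos : 0 < Real.cos (Real.arcsin (ε / ρ)) :=
    cos_arcsin_pos (by linarith [div_pos hε hρ]) ((div_lt_one hρ).mpr hερ)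
  exact ⟨himage, fun hU => sector_not_mem_nhds_zero θ hcos (mem_of_superset hU himage)⟩
end

section
/- Let f : ℂ → ℂ be holomorphic and nonconstant on a connected open set Ω, and let V = f⁻¹(0) ∩ Ω. Then for every θ ∈ ℝ, the closure of F_θ = {z ∈ Ω \ V : f(z)/|f(z)| = e^{iθ}} contains V. (Boundary stability of the Milnor fibration holds for holomorphic functions, via the open mapping theorem.) -/
open Complex

/-!
By the open mapping theorem, `f` maps every neighbourhood of a zero `z₀` inside `Ω` onto a
neighbourhood of `0`. Such a neighbourhood meets the open ray `{r e^{iθ} | r > 0}`, and any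
preimage of a point of that ray lies in the Milnor fiber `F_θ`.
-/

open Filter Topology

theorem mem_closure_inter_preimage_of_isOpen_image {X Y : Type*} [TopologicalSpace X]
    [TopologicalSpace Y] {f : X → Y} {Ω : Set X} (hΩ : IsOpen Ω)
    (hf : ∀ s ⊆ Ω, IsOpen s → IsOpen (f '' s)) {t : Set Y} {z : X} (hz : z ∈ Ω)
    (hfz : f z ∈ closure t) : z ∈ closure (Ω ∩ f ⁻¹' t) := by
  refine mem_closure_iff.mpr fun U hU hzU => ?_
  have himage : IsOpen (f '' (U ∩ Ω)) := hf _ Set.inter_subset_right (hU.inter hΩ)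
  obtain ⟨_, ⟨x, ⟨hxU, hxΩ⟩, rfl⟩, hxt⟩ :=
    mem_closure_iff.mp hfz _ himage ⟨z, ⟨hzU, hz⟩, rfl⟩
  exact ⟨x, hxU, hxΩ, hxt⟩

theorem ofReal_mul_exp_mul_I_div_norm {r : ℝ} (hr : 0 < r) (θ : ℝ) :
    (r * exp (θ * I)) / ((‖(r : ℂ) * exp (θ * I)‖ : ℝ) : ℂ) = exp (θ * I) := by
  rw [norm_mul, norm_exp_ofReal_mul_I, mul_one, norm_real, Real.norm_of_nonneg hr.le,
    mul_div_cancel_left₀ _ (ofReal_ne_zero.mpr hr.ne')]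

theorem zero_mem_closure_setOf_div_norm_eq_exp (θ : ℝ) :
    (0 : ℂ) ∈ closure {w : ℂ | w ≠ 0 ∧ w / ((‖w‖ : ℝ) : ℂ) = exp (θ * I)} := by
  have hray : Tendsto (fun r : ℝ => (r : ℂ) * exp (θ * I)) (𝓝[>] 0) (𝓝 0) := by
    have hcont : Continuous fun r : ℝ => (r : ℂ) * exp (θ * I) := by fun_prop
    exact (hcont.tendsto' 0 0 (by simp)).mono_left nhdsWithin_le_nhds
  refine mem_closure_of_tendsto hray (eventually_nhdsWithin_of_forall fun r (hr : 0 < r) => ?_)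
  exact ⟨mul_ne_zero (ofReal_ne_zero.mpr hr.ne') (exp_ne_zero _),
    ofReal_mul_exp_mul_I_div_norm hr θ⟩

/-- Boundary stability for holomorphic functions: if `f` is holomorphic and nonconstant on a
connected open set `Ω ⊆ ℂ` with zero set `V`, then for every `θ` the closure of the Milnor
fiber `F_θ = {z ∈ Ω \ V | f(z)/|f(z)| = e^{iθ}}` contains `V`. -/
theorem holomorphic_boundary_stability (f : ℂ → ℂ) (Ω : Set ℂ)
    (hΩo : IsOpen Ω) (hΩc : IsPreconnected Ω)
    (hf : DifferentiableOn ℂ f Ω)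
    (hnc : ¬ ∃ c : ℂ, ∀ z ∈ Ω, f z = c) (θ : ℝ) :
    Ω ∩ f ⁻¹' {0} ⊆
      closure {z | z ∈ Ω ∧ f z ≠ 0 ∧
        f z / ((‖f z‖ : ℝ) : ℂ) = Complex.exp (θ * Complex.I)} := by
  rintro z ⟨hzΩ, hz0 : f z = 0⟩
  have hopen : ∀ s ⊆ Ω, IsOpen s → IsOpen (f '' s) :=
    ((hf.analyticOnNhd hΩo).is_constant_or_isOpen hΩc).resolve_left hnc
  refine mem_closure_inter_preimage_of_isOpen_image hΩo hopen hzΩ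
    (t := {w | w ≠ 0 ∧ w / ((‖w‖ : ℝ) : ℂ) = exp (θ * I)}) ?_
  rw [hz0]
  exact zero_mem_closure_setOf_div_norm_eq_exp θ
end
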